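/- Let H be a real Hilbert space (a complete real inner product space) and G a closed subspace of H; G^⊥ denotes its orthogonal complement. Then for every p ∈ G and every w ∈ H, ‖p − w‖² = inf_{n ∈ G^⊥} ‖w − p + n‖² + inf_{g ∈ G} ‖g − w‖². -/

import Mathlib

private lemma pyth {H : Type*} [NormedAddCommGroup H] [InnerProductSpace ℝ H]
    (G : Submodule ℝ H) {x y : H} (hx : x ∈ G) (hy : y ∈ Gᗮ) :
    ‖x + y‖ ^ 2 = ‖x‖ ^ 2 + ‖y‖ ^ 2 := by
  have h : (inner ℝ x y : ℝ) = 0 := Submodule.inner_right_of_mem_orthogonal hx hy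
  rw [norm_add_sq_real, h]; ring

/-- Hilbert-space form of the generalized Prager–Synge identity.
For a closed subspace `G` of a real Hilbert space `H`, `p ∈ G` and `w ∈ H`,
`‖p − w‖² = inf_{n ∈ G^⊥} ‖w − p + n‖² + inf_{g ∈ G} ‖g − w‖²`. -/
theorem stmt3 {H : Type*} [NormedAddCommGroup H] [InnerProductSpace ℝ H]
    [CompleteSpace H] (G : Submodule ℝ H) (hG : IsClosed (G : Set H))
    (p : H) (hp : p ∈ G) (w : H) :
    ‖p - w‖ ^ 2
      = (⨅ n : Gᗮ, ‖w - p + (n : H)‖ ^ 2) + ⨅ g : G, ‖(g : H) - w‖ ^ 2 := by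
  haveI : CompleteSpace G := hG.completeSpace_coe
  set a : H := (G.orthogonalProjectionOnto w : H) with ha
  have haG : a ∈ G := (G.orthogonalProjectionOnto w).2
  have hwa : w - a ∈ Gᗮ := Submodule.sub_starProjection_mem_orthogonal w
  -- first infimum equals ‖a - p‖²
  have h1 : (⨅ n : Gᗮ, ‖w - p + (n : H)‖ ^ 2) = ‖a - p‖ ^ 2 := by
    apply le_antisymm
    · have := ciInf_le (f := fun n : Gᗮ => ‖w - p + (n : H)‖ ^ 2)
        ⟨0, by rintro x ⟨n, rfl⟩; positivity⟩ ⟨a - w, by simpa using Gᗮ.neg_mem hwa⟩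
      simpa [show w - p + (a - w) = a - p by abel] using this
    · refine le_ciInf fun n => ?_
      have hdec : w - p + (n : H) = (a - p) + ((w - a) + n) := by abel
      have : ‖w - p + (n : H)‖ ^ 2 = ‖a - p‖ ^ 2 + ‖(w - a) + (n : H)‖ ^ 2 := by
        rw [hdec]; exact pyth G (G.sub_mem haG hp) (Gᗮ.add_mem hwa n.2)
      nlinarith [sq_nonneg ‖(w - a) + (n : H)‖]
  -- second infimum equals ‖a - w‖²
  have h2 : (⨅ g : G, ‖(g : H) - w‖ ^ 2) = ‖a - w‖ ^ 2 := by
    apply le_antisymm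
    · exact ciInf_le (f := fun g : G => ‖(g : H) - w‖ ^ 2) ⟨0, by rintro x ⟨g, rfl⟩; positivity⟩ ⟨a, haG⟩
    · refine le_ciInf fun g => ?_
      have hdec : (g : H) - w = ((g : H) - a) + (a - w) := by abel
      have : ‖(g : H) - w‖ ^ 2 = ‖(g : H) - a‖ ^ 2 + ‖a - w‖ ^ 2 := by
        rw [hdec]; exact pyth G (G.sub_mem g.2 haG) (by simpa using Gᗮ.neg_mem hwa)
      nlinarith [sq_nonneg ‖(g : H) - a‖]
  rw [h1, h2]
  have hdec : p - w = (p - a) + (a - w) := by abel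
  have := pyth G (G.sub_mem hp haG) (show a - w ∈ Gᗮ by simpa using Gᗮ.neg_mem hwa)
  rw [hdec, this]
  rw [show ‖a - p‖ = ‖p - a‖ from norm_sub_rev _ _]
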